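/- Every nonempty compact topological semigroup with continuous multiplication in which both left and right multiplication are injective (cancellative) is a group. -/
import Mathlib


/-- Numakura's theorem: a nonempty compact Hausdorff topological semigroup with continuous
multiplication in which both left and right multiplication are injective is a group. -/
theorem compact_cancellative_semigroup_is_group
    {G : Type*} [Semigroup G] [TopologicalSpace G] [CompactSpace G] [T2Space G]
    [ContinuousMul G] [Nonempty G]
    (hleft : ∀ x a b : G, x * a = x * b → a = b)
    (hright : ∀ x a b : G, a * x = b * x → a = b) :
    ∃ e : G, (∀ x : G, e * x = x ∧ x * e = x) ∧ ∀ x : G, ∃ y : G, x * y = e ∧ y * x = e := by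
  obtain ⟨e, he⟩ := exists_idempotent_of_compact_t2_of_continuous_mul_left
    (M := G) (fun r => continuous_mul_right r)
  have hid : ∀ x : G, e * x = x ∧ x * e = x := by
    intro x
    constructor
    · exact hleft e _ _ (by rw [← mul_assoc, he])
    · exact hright e _ _ (by rw [mul_assoc, he])
  refine ⟨e, hid, fun x => ?_⟩
  set K : Set G := Set.range (x * ·) with hK
  have hmem : ∀ a b : G, a ∈ K → b ∈ K → a * b ∈ K := by
    rintro a b ⟨p, rfl⟩ ⟨q, rfl⟩
    exact ⟨p * (x * q), by simp [mul_assoc]⟩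
  letI : Semigroup K :=
    { mul := fun a b => ⟨a.1 * b.1, hmem _ _ a.2 b.2⟩
      mul_assoc := fun a b c => Subtype.ext (mul_assoc a.1 b.1 c.1) }
  haveI : CompactSpace K :=
    isCompact_iff_compactSpace.1 (isCompact_range (continuous_mul_left x))
  haveI : Nonempty K := ⟨⟨x * x, x, rfl⟩⟩
  have hcont : ∀ r : K, Continuous (fun a : K => a * r) := by
    intro r
    have : Continuous (fun a : K => (⟨a.1 * r.1, hmem _ _ a.2 r.2⟩ : K)) :=
      Continuous.subtype_mk (continuous_subtype_val.mul continuous_const) _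
    exact this
  obtain ⟨m, hm⟩ := exists_idempotent_of_compact_t2_of_continuous_mul_left hcont
  have hm' : (m : G) * m = m := congrArg Subtype.val hm
  have hme : (m : G) = e := hleft m _ _ (by rw [hm', (hid (m : G)).2])
  obtain ⟨y, hy⟩ := m.2
  have hxy : x * y = e := by rw [show x * y = m from hy, hme]
  refine ⟨y, hxy, hleft x _ _ ?_⟩
  rw [← mul_assoc, hxy, (hid x).1, (hid x).2]
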